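/- Let m ≥ 2 be an integer and p, q integers with 1 ≤ p ≤ m−1, 1 ≤ q ≤ m+1 and p ≡ q (mod 2). Set p' = m−p, q' = m+2−q and M = max(pq, p'q')/2. Then h^m_{p,q} + M > m²/8. -/

import Mathlib

/-!
With `N = m(m+2)` and `s = (m+2)p + mq`, the identity `(a - b)² + 4ab = (a + b)²` gives
`8N (h_{p,q} + pq/2) = s² - 4` and `8N (h_{p,q} + p'q'/2) = (2N - s)² - 4`, since
`(m+2)p' + mq' = 2N - s`. One of `s`, `2N - s` is at least `N` in absolute value, so
`8N (h_{p,q} + M) ≥ N² - 4`, and `N² - 4 - m²N = 2m²(m+2) - 4 > 0`.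
-/

/-- `h^m_{p,q} = (((m+2)p − mq)² − 4) / (8m(m+2))`. -/
noncomputable def hPQ (m : ℝ) (p q : ℤ) : ℝ :=
  (((m + 2) * (p : ℝ) - m * (q : ℝ)) ^ 2 - 4) / (8 * m * (m + 2))

lemma sq_le_max_sq_two_mul_sub {N : ℝ} (hN : 0 ≤ N) (s : ℝ) :
    N ^ 2 ≤ max (s ^ 2) ((2 * N - s) ^ 2) := by
  rcases le_total N s with h | h
  · exact le_max_of_le_left (pow_le_pow_left₀ hN h 2)
  · exact le_max_of_le_right (pow_le_pow_left₀ hN (by linarith) 2)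

lemma hPQ_add_half_mul {m : ℝ} (hm : m * (m + 2) ≠ 0) (p q : ℤ) :
    hPQ m p q + p * q / 2 = (((m + 2) * p + m * q) ^ 2 - 4) / (8 * m * (m + 2)) := by
  obtain ⟨hm0, hm2⟩ := mul_ne_zero_iff.mp hm
  unfold hPQ
  field_simp
  ring

lemma hPQ_add_half_mul_sub {m : ℝ} (hm : m * (m + 2) ≠ 0) (p q : ℤ) :
    hPQ m p q + (m - p) * (m + 2 - q) / 2 =
      ((2 * (m * (m + 2)) - ((m + 2) * p + m * q)) ^ 2 - 4) / (8 * m * (m + 2)) := by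
  obtain ⟨hm0, hm2⟩ := mul_ne_zero_iff.mp hm
  unfold hPQ
  field_simp
  ring

lemma sq_sub_four_div_le_hPQ_add_max {m : ℝ} (hm : 0 < m * (m + 2)) (p q : ℤ) :
    ((m * (m + 2)) ^ 2 - 4) / (8 * m * (m + 2)) ≤
      hPQ m p q + max (p * q : ℝ) ((m - p) * (m + 2 - q)) / 2 := by
  have h8 : 0 < 8 * m * (m + 2) := by linarith
  rw [← max_div_div_right zero_le_two, add_max, hPQ_add_half_mul hm.ne',
    hPQ_add_half_mul_sub hm.ne', max_div_div_right h8.le, max_sub_sub_right]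
  gcongr
  exact sq_le_max_sq_two_mul_sub hm.le _

lemma sq_div_eight_lt_sq_sub_four_div {m : ℝ} (hm : 1 ≤ m) :
    m ^ 2 / 8 < ((m * (m + 2)) ^ 2 - 4) / (8 * m * (m + 2)) := by
  rw [div_lt_div_iff₀ (by norm_num) (by positivity)]
  nlinarith [mul_le_mul hm hm zero_le_one (by linarith)]

theorem h_plus_M_gt_general (m : ℤ) (hm : 2 ≤ m) (p q : ℤ) :
    (m : ℝ) ^ 2 / 8 <
      hPQ (m : ℝ) p q + ((max (p * q) ((m - p) * (m + 2 - q)) : ℤ) : ℝ) / 2 := by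
  have hm1 : (1 : ℝ) ≤ m := by exact_mod_cast (by omega : (1 : ℤ) ≤ m)
  push_cast
  exact (sq_div_eight_lt_sq_sub_four_div hm1).trans_le
    (sq_sub_four_div_le_hPQ_add_max (by positivity) p q)

/-- For `m ≥ 2`, `1 ≤ p ≤ m−1`, `1 ≤ q ≤ m+1`, `p ≡ q (mod 2)`, `p' = m−p`, `q' = m+2−q`
and `M = max(pq, p'q')/2`, one has `h^m_{p,q} + M > m²/8`. -/
theorem h_plus_M_gt (m : ℤ) (hm : 2 ≤ m) (p q : ℤ)
    (hp1 : 1 ≤ p) (hp2 : p ≤ m - 1) (hq1 : 1 ≤ q) (hq2 : q ≤ m + 1)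
    (hpar : p % 2 = q % 2) :
    (m : ℝ) ^ 2 / 8 <
      hPQ (m : ℝ) p q + ((max (p * q) ((m - p) * (m + 2 - q)) : ℤ) : ℝ) / 2 :=
  h_plus_M_gt_general m hm p q
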